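/- If f is a continuously differentiable function on I and 0 < a < b, then there exists δ > 0 such that B(N̂(f,a), δ) ⊂ N̂(f,b) and B(Ň(f,a), δ) ⊂ Ň(f,b). -/

import Mathlib

open Filter Topology TopologicalSpace Set MeasureTheory

noncomputable section

/-- The unit interval `I = [0,1]` as a type. -/
abbrev UI : Type := ↥(Set.Icc (0:ℝ) 1)

/-- The space `𝒦` of closed subsets of `I`, with the (extended) Hausdorff metric topology. -/
abbrev KSp : Type := TopologicalSpace.Closeds UI

/-- The open `r`-neighbourhood of a set `A` within `I`. -/
def nbhd (A : Set UI) (r : ℝ) : Set UI := ⋃ a ∈ A, Metric.ball a r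

/-- Upper right Dini derivative `D⁺f(x)`, as an extended real. -/
def DiniSupR (f : UI → ℝ) (x : UI) : EReal :=
  Filter.limsup (fun y : UI => (((f y - f x) / ((y : ℝ) - (x : ℝ))) : EReal)) (𝓝[>] x)

/-- Lower right Dini derivative `D₊f(x)`. -/
def DiniInfR (f : UI → ℝ) (x : UI) : EReal :=
  Filter.liminf (fun y : UI => (((f y - f x) / ((y : ℝ) - (x : ℝ))) : EReal)) (𝓝[>] x)

/-- Upper left Dini derivative `D⁻f(x)`. -/
def DiniSupL (f : UI → ℝ) (x : UI) : EReal :=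
  Filter.limsup (fun y : UI => (((f y - f x) / ((y : ℝ) - (x : ℝ))) : EReal)) (𝓝[<] x)

/-- Lower left Dini derivative `D₋f(x)`. -/
def DiniInfL (f : UI → ℝ) (x : UI) : EReal :=
  Filter.liminf (fun y : UI => (((f y - f x) / ((y : ℝ) - (x : ℝ))) : EReal)) (𝓝[<] x)

/-- `x` is a knot point of `f`. -/
def IsKnotPoint (f : UI → ℝ) (x : UI) : Prop :=
  (0 < (x:ℝ) ∧ (x:ℝ) < 1 ∧ DiniSupR f x = ⊤ ∧ DiniSupL f x = ⊤ ∧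
      DiniInfR f x = ⊥ ∧ DiniInfL f x = ⊥) ∨
  ((x:ℝ) = 0 ∧ DiniSupR f x = ⊤ ∧ DiniInfR f x = ⊥) ∨
  ((x:ℝ) = 1 ∧ DiniSupL f x = ⊤ ∧ DiniInfL f x = ⊥)

/-- `N(f)`: the set of points of `I` that are not knot points of `f`. -/
def NonKnot (f : UI → ℝ) : Set UI := {x | ¬ IsKnotPoint f x}

/-- `S` is an `Fσ` subset of `I`. -/
def IsFsigma (S : Set UI) : Prop :=
  ∃ F : ℕ → Set UI, (∀ n, IsClosed (F n)) ∧ S = ⋃ n, F n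

/-- `N⁺(f,a)`. -/
def NplusUp (f : UI → ℝ) (a : ℝ) : Set UI :=
  {x | (x:ℝ) ≤ 1 - 2^(-a) ∧
    ∀ y : UI, (x:ℝ) ≤ (y:ℝ) → (y:ℝ) ≤ (x:ℝ) + 2^(-a) →
      f y - f x ≤ a * ((y:ℝ) - (x:ℝ))}

/-- `N₊(f,a)`. -/
def NplusLow (f : UI → ℝ) (a : ℝ) : Set UI :=
  {x | (x:ℝ) ≤ 1 - 2^(-a) ∧
    ∀ y : UI, (x:ℝ) ≤ (y:ℝ) → (y:ℝ) ≤ (x:ℝ) + 2^(-a) →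
      -a * ((y:ℝ) - (x:ℝ)) ≤ f y - f x}

/-- `N⁻(f,a)`. -/
def NminusUp (f : UI → ℝ) (a : ℝ) : Set UI :=
  {x | 2^(-a) ≤ (x:ℝ) ∧
    ∀ y : UI, (x:ℝ) - 2^(-a) ≤ (y:ℝ) → (y:ℝ) ≤ (x:ℝ) →
      a * ((y:ℝ) - (x:ℝ)) ≤ f y - f x}

/-- `N₋(f,a)`. -/
def NminusLow (f : UI → ℝ) (a : ℝ) : Set UI :=
  {x | 2^(-a) ≤ (x:ℝ) ∧
    ∀ y : UI, (x:ℝ) - 2^(-a) ≤ (y:ℝ) → (y:ℝ) ≤ (x:ℝ) →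
      f y - f x ≤ -a * ((y:ℝ) - (x:ℝ))}

/-- `N̂(f,a) = N⁺(f,a) ∪ N₋(f,a)`. -/
def Nhat (f : UI → ℝ) (a : ℝ) : Set UI := NplusUp f a ∪ NminusLow f a

/-- `Ň(f,a) = N₊(f,a) ∪ N⁻(f,a)`. -/
def Ncheck (f : UI → ℝ) (a : ℝ) : Set UI := NplusLow f a ∪ NminusUp f a

/-- `N(f,a)`. -/
def NN (f : UI → ℝ) (a : ℝ) : Set UI := Nhat f a ∪ Ncheck f a

/-- `f : I → ℝ` is continuously differentiable on `I`. -/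
def IsC1 (f : UI → ℝ) : Prop :=
  ContDiffOn ℝ 1 (Set.IccExtend (zero_le_one : (0:ℝ) ≤ 1) f) (Set.Icc (0:ℝ) 1)

/-- `φ` is a bump function of height `h` and width `w` located at `H1` and `H2`. -/
def IsBump (φ : C(UI, ℝ)) (h w : ℝ) (H1 H2 : Set UI) : Prop :=
  IsC1 ⇑φ ∧ ‖φ‖ = h ∧ (∀ x ∈ H1, φ x = h) ∧ (∀ x ∈ H2, φ x = -h) ∧
  {x : UI | 0 < φ x} ⊆ nbhd H1 w ∧ {x : UI | φ x < 0} ⊆ nbhd H2 w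

/-- The shifted sequence `n^k`. -/
def shiftSeq (n : ℕ → ℕ) (k : ℕ) : ℕ → ℕ := fun j => n (j + k)

/-- The index set `A_j^m(n) = [n_j] ∪ ⋃_{i=j}^{m-1} {n_i+1, …, n_i+j-1}`. -/
def Aset (n : ℕ → ℕ) (j m : ℕ) : Set ℕ :=
  Set.Icc 1 (n j) ∪ ⋃ i ∈ Set.Ico j m, Set.Icc (n i + 1) (n i + (j - 1))

/-- `n ∈ Z`: sequence of positive integers with `n_{j+1} ≥ n_j + j`. -/
def memZ (n : ℕ → ℕ) : Prop := ∀ j, 1 ≤ j → 1 ≤ n j ∧ n j + j ≤ n (j + 1)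

/-- `δ ∈ Y`: strictly decreasing sequence in `(0,1)` tending to `0`. -/
def memY (δ : ℕ → ℝ) : Prop :=
  (∀ j, 1 ≤ j → 0 < δ j ∧ δ j < 1) ∧ (∀ j, 1 ≤ j → δ (j + 1) < δ j) ∧
    Filter.Tendsto δ Filter.atTop (𝓝 0)

/-- `a ∈ X`: strictly increasing sequence of positive reals tending to `∞`. -/
def memX (a : ℕ → ℝ) : Prop :=
  (∀ j, 1 ≤ j → 0 < a j) ∧ (∀ j, 1 ≤ j → a j < a (j + 1)) ∧
    Filter.Tendsto a Filter.atTop Filter.atTop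

/-- `K ∈ 𝒮_k(n,δ)`. -/
def memS (K : ℕ → KSp) (n : ℕ → ℕ) (δ : ℕ → ℝ) (k : ℕ) : Prop :=
  ∀ j m, 2 ≤ j → j + 1 ≤ m →
    (⋃ i ∈ Aset (shiftSeq n k) j m \ Aset (shiftSeq n k) j (m - 1), (K i : Set UI))
      ⊆ ⋃ i ∈ Aset (shiftSeq n k) (j - 1) (m - 1), nbhd (K i : Set UI) (δ m)

/-- `(K, f, n, δ, a, b) ∈ 𝒴_k`. -/
def memYk (K : ℕ → KSp) (f : C(UI, ℝ)) (n : ℕ → ℕ) (δ : ℕ → ℝ) (a b : ℕ → ℝ)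
    (k : ℕ) : Prop :=
  memZ n ∧ memY δ ∧ memX a ∧ memX b ∧ memS K n δ k ∧
  ∀ j m, 1 ≤ j → j ≤ m →
    NN ⇑f (a j) ⊆ (⋃ i ∈ Aset (shiftSeq n k) j m, nbhd (K i : Set UI) (δ m)) ∧
    (⋃ i ∈ Aset n j m, (K i : Set UI)) ⊆ nbhd (NN ⇑f (b j)) (δ m)

/-- `(K, f) ∈ 𝒳`: the projection of `𝒴 = ⋃_k 𝒴_k` to `𝒦^ℕ × C(I)`. -/
def memXcal (K : ℕ → KSp) (f : C(UI, ℝ)) : Prop :=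
  ∃ n δ a b k, memYk K f n δ a b k

/-!
Reflecting by `x ↦ 1 - x` turns `N₋` into `N⁺`, and replacing `f` by `-f` turns `Ň` into `N̂`,
so it suffices to find a neighbourhood of `N⁺(f,a)` inside `N⁺(f,b)`. Let `x ∈ N⁺(f,a)` and let
`x'` be close to `x`. By the mean value theorem and the uniform continuity of `f'`, slopes of `f`
over short intervals lying in a common short window differ by less than `b - a`; as `f` has slope
at most `a` just to the right of `x`, it has slope at most `b` over short intervals starting at
`x'`. Over a long interval `[x', y]`, compare with `[x, y]`: the Lipschitz error
`(K + |a|) |x - x'|` is small compared with `(b - a) (y - x')`.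
-/

open Metric unitInterval

theorem ContDiffOn.exists_derivWithin_eq_slope {F : ℝ → ℝ} {p q u v : ℝ}
    (hF : ContDiffOn ℝ 1 F (Icc p q)) (hpu : p ≤ u) (huv : u < v) (hvq : v ≤ q) :
    ∃ c ∈ Ioo u v, derivWithin F (Icc p q) c = slope F u v := by
  have hsub : Icc u v ⊆ Icc p q := Icc_subset_Icc hpu hvq
  have hFd := (hF.differentiableOn one_ne_zero).mono (Ioo_subset_Icc_self.trans hsub)
  obtain ⟨c, hc, hslope⟩ := exists_deriv_eq_slope' F huv (hF.continuousOn.mono hsub) hFd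
  refine ⟨c, hc, ?_⟩
  rw [derivWithin_of_mem_nhds (Icc_mem_nhds (hpu.trans_lt hc.1) (hc.2.trans_le hvq)), hslope]

theorem ContDiffOn.exists_slope_le_slope_add {F : ℝ → ℝ} {p q : ℝ}
    (hF : ContDiffOn ℝ 1 F (Icc p q)) (hpq : p < q) {ε : ℝ} (hε : 0 < ε) :
    ∃ η > 0, ∀ ⦃u v u' v'⦄, p ≤ u → u < v → v ≤ q → p ≤ u' → u' < v' → v' ≤ q →
      v - u' ≤ η → v' - u ≤ η → slope F u' v' ≤ slope F u v + ε := by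
  have hg := hF.continuousOn_derivWithin (uniqueDiffOn_Icc hpq) le_rfl
  obtain ⟨η, hη, hg_unif⟩ := Metric.uniformContinuousOn_iff.1
    (isCompact_Icc.uniformContinuousOn_of_continuous hg) ε hε
  refine ⟨η, hη, fun u v u' v' hpu huv hvq hpu' huv' hvq' h₁ h₂ ↦ ?_⟩
  obtain ⟨c, hc, hc_eq⟩ := hF.exists_derivWithin_eq_slope hpu huv hvq
  obtain ⟨c', hc', hc'_eq⟩ := hF.exists_derivWithin_eq_slope hpu' huv' hvq'
  rw [← hc_eq, ← hc'_eq]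
  have := hg_unif c' ⟨by linarith [hc'.1], by linarith [hc'.2]⟩ c
    ⟨by linarith [hc.1], by linarith [hc.2]⟩
    (by rw [Real.dist_eq, abs_lt]; constructor <;> linarith [hc.1, hc.2, hc'.1, hc'.2])
  rw [Real.dist_eq, abs_lt] at this
  linarith

theorem Isometry.thickening_preimage_of_involutive {α : Type*} [PseudoMetricSpace α]
    {e : α → α} (he : Isometry e) (he' : Function.Involutive e) (δ : ℝ) (s : Set α) :
    thickening δ (e ⁻¹' s) = e ⁻¹' thickening δ s := by
  ext x
  simp only [mem_preimage, mem_thickening_iff]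
  constructor
  · rintro ⟨z, hz, hxz⟩
    exact ⟨e z, hz, by rwa [he.dist_eq]⟩
  · rintro ⟨z, hz, hxz⟩
    exact ⟨e z, by rwa [he' z], by rwa [← he.dist_eq, he' z]⟩

theorem Metric.exists_thickening_union_subset {α : Type*} [PseudoEMetricSpace α]
    {s t s' t' : Set α} (hs : ∃ δ > 0, thickening δ s ⊆ s') (ht : ∃ δ > 0, thickening δ t ⊆ t') :
    ∃ δ > 0, thickening δ (s ∪ t) ⊆ s' ∪ t' := by
  obtain ⟨δ₁, hδ₁, h₁⟩ := hs
  obtain ⟨δ₂, hδ₂, h₂⟩ := ht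
  refine ⟨min δ₁ δ₂, lt_min hδ₁ hδ₂, ?_⟩
  rw [thickening_union]
  exact union_subset_union ((thickening_mono (min_le_left _ _) _).trans h₁)
    ((thickening_mono (min_le_right _ _) _).trans h₂)

theorem unitInterval.isometry_symm : Isometry σ :=
  Isometry.of_dist_eq fun x y ↦ by
    rw [Subtype.dist_eq, Subtype.dist_eq, coe_symm_eq, coe_symm_eq, Real.dist_eq, Real.dist_eq,
      sub_sub_sub_cancel_left, abs_sub_comm]

theorem nbhd_eq_thickening (A : Set UI) (r : ℝ) : nbhd A r = thickening r A :=
  thickening_eq_biUnion_ball.symm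

theorem IsC1.neg {f : UI → ℝ} (hf : IsC1 f) : IsC1 (-f) :=
  ContDiffOn.neg hf

theorem IsC1.comp_symm {f : UI → ℝ} (hf : IsC1 f) : IsC1 (f ∘ σ) := by
  have h : IccExtend zero_le_one (f ∘ σ) = IccExtend zero_le_one f ∘ fun t ↦ 1 - t := by
    ext t
    simp [IccExtend, symm_projIcc]
  unfold IsC1
  rw [h]
  exact hf.comp (contDiffOn_const.sub contDiffOn_id) fun t ht ↦ Icc.mem_iff_one_sub_mem.mp ht

theorem IsC1.exists_lipschitzWith {f : UI → ℝ} (hf : IsC1 f) : ∃ K, LipschitzWith K f := by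
  obtain ⟨K, hK⟩ := ContDiffOn.exists_lipschitzOnWith hf one_ne_zero (convex_Icc 0 1) isCompact_Icc
  have hrestrict : (Icc (0 : ℝ) 1).domRestrict (IccExtend zero_le_one f) = f :=
    funext (IccExtend_val _ f)
  exact ⟨K, hrestrict ▸ hK.to_restrict⟩

theorem Ncheck_eq_Nhat_neg (f : UI → ℝ) (a : ℝ) : Ncheck f a = Nhat (-f) a := by
  have hplus : NplusLow f a = NplusUp (-f) a := by
    ext x
    simp only [NplusLow, NplusUp, mem_ofPred_eq, Pi.neg_apply]
    refine and_congr_right fun _ ↦ forall₃_congr fun y _ _ ↦ ?_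
    constructor <;> intro h <;> linarith
  have hminus : NminusUp f a = NminusLow (-f) a := by
    ext x
    simp only [NminusUp, NminusLow, mem_ofPred_eq, Pi.neg_apply]
    refine and_congr_right fun _ ↦ forall₃_congr fun y _ _ ↦ ?_
    constructor <;> intro h <;> linarith
  rw [Ncheck, Nhat, hplus, hminus]

theorem NminusLow_eq_preimage_symm (f : UI → ℝ) (a : ℝ) :
    NminusLow f a = σ ⁻¹' NplusUp (f ∘ σ) a := by
  ext x
  simp only [NminusLow, NplusUp, mem_ofPred_eq, mem_preimage, Function.comp_apply, coe_symm_eq,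
    symm_symm]
  refine and_congr (by constructor <;> intro h <;> linarith) ⟨fun h y hy₁ hy₂ ↦ ?_, fun h y hy₁ hy₂ ↦ ?_⟩
  · have := h (σ y) (by rw [coe_symm_eq]; linarith) (by rw [coe_symm_eq]; linarith)
    rw [coe_symm_eq] at this
    linarith
  · have := h (σ y) (by rw [coe_symm_eq]; linarith) (by rw [coe_symm_eq]; linarith)
    rw [symm_symm, coe_symm_eq] at this
    linarith

theorem slope_IccExtend_le_of_mem_NplusUp {f : UI → ℝ} {a t : ℝ} {x : UI} (hx : x ∈ NplusUp f a)
    (ht : 0 < t) (ht_le : t ≤ 2 ^ (-a)) :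
    slope (IccExtend zero_le_one f) x (x + t) ≤ a := by
  have hxt : (x : ℝ) + t ∈ Icc (0 : ℝ) 1 := ⟨by linarith [x.2.1], by linarith [hx.1]⟩
  rw [slope_def_field, add_sub_cancel_left, div_le_iff₀ ht, IccExtend_of_mem _ _ hxt,
    IccExtend_val]
  simpa using hx.2 ⟨_, hxt⟩ (by simp [ht.le]) (by simp [ht_le])

theorem LipschitzWith.sub_le_of_mem_NplusUp {f : UI → ℝ} {K : NNReal} (hK : LipschitzWith K f)
    {a : ℝ} {x : UI} (hx : x ∈ NplusUp f a) (x' : UI) {y : UI} (hxy : (x : ℝ) ≤ y)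
    (hy : (y : ℝ) ≤ x + 2 ^ (-a)) :
    f y - f x' ≤ a * (y - x') + (K + |a|) * |(x : ℝ) - x'| := by
  have hx_y := hx.2 y hxy hy
  have hx'_x : f x - f x' ≤ K * |(x : ℝ) - x'| := by
    have := hK.dist_le_mul x x'
    rw [Real.dist_eq, Subtype.dist_eq, Real.dist_eq] at this
    exact (le_abs_self _).trans this
  have hax : a * (x' - x) ≤ |a| * |(x : ℝ) - x'| := by
    rw [← abs_mul, ← abs_neg, ← mul_neg, neg_sub]
    exact le_abs_self _
  linarith

theorem exists_nbhd_NplusUp_subset {f : UI → ℝ} (hf : IsC1 f) {a b : ℝ} (hab : a < b) :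
    ∃ δ > 0, nbhd (NplusUp f a) δ ⊆ NplusUp f b := by
  obtain ⟨K, hK⟩ := hf.exists_lipschitzWith
  obtain ⟨η, hη, hslope⟩ := ContDiffOn.exists_slope_le_slope_add hf zero_lt_one (sub_pos.2 hab)
  set F := IccExtend zero_le_one f
  have hF : ∀ x : UI, F x = f x := IccExtend_val _ f
  have hba : 0 < b - a := sub_pos.2 hab
  have hpow : (2 : ℝ) ^ (-b) < 2 ^ (-a) := Real.rpow_lt_rpow_of_exponent_lt one_lt_two (by linarith)
  set δ := min (2 ^ (-a) - 2 ^ (-b)) (min (η / 3) ((b - a) * (η / 3) / (K + |a| + 1)))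
  have hδ₁ : δ ≤ 2 ^ (-a) - 2 ^ (-b) := min_le_left _ _
  have hδ₂ : δ ≤ η / 3 := (min_le_right _ _).trans (min_le_left _ _)
  have hδ₃ : (K + |a| + 1) * δ ≤ (b - a) * (η / 3) :=
    (le_div_iff₀' (by positivity)).1 ((min_le_right _ _).trans (min_le_right _ _))
  refine ⟨δ, lt_min (by linarith) (lt_min (by positivity) (by positivity)), ?_⟩
  rintro x' hx'
  rw [nbhd_eq_thickening, mem_thickening_iff] at hx'
  obtain ⟨x, hx, hxx'⟩ := hx'
  have hd : |(x : ℝ) - x'| < δ := by rwa [abs_sub_comm, ← Real.dist_eq, ← Subtype.dist_eq]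
  obtain ⟨hxx'₁, hxx'₂⟩ := abs_lt.1 hd
  refine ⟨by linarith [hx.1], fun y hy₁ hy₂ ↦ ?_⟩
  rcases hy₁.eq_or_lt with hy | hy
  · simp [Subtype.ext hy]
  rcases le_or_gt ((y : ℝ) - x') (η / 3) with hnear | hfar
  · set t := min (2 ^ (-a)) (η / 3)
    have ht : 0 < t := lt_min (by positivity) (by positivity)
    have hxt : (x : ℝ) + t ≤ 1 := by linarith [hx.1, min_le_left (2 ^ (-a)) (η / 3)]
    have := hslope x.2.1 (lt_add_of_pos_right _ ht) hxt x'.2.1 hy y.2.2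
      (by linarith [min_le_right (2 ^ (-a)) (η / 3)]) (by linarith)
    rw [slope_def_field, hF, hF, div_le_iff₀ (sub_pos.2 hy)] at this
    calc f y - f x' ≤ (slope F x (x + t) + (b - a)) * (y - x') := this
      _ ≤ b * (y - x') := by
        gcongr
        linarith [slope_IccExtend_le_of_mem_NplusUp hx ht (min_le_left _ _)]
  · have hKd : (K + |a|) * |(x : ℝ) - x'| ≤ (b - a) * (η / 3) := by
      nlinarith [mul_le_mul_of_nonneg_left hd.le (by positivity : (0 : ℝ) ≤ K + |a|)]
    have hfar' : (b - a) * (η / 3) < (b - a) * (y - x') := by gcongr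
    linarith [hK.sub_le_of_mem_NplusUp hx x' (y := y) (by linarith) (by linarith)]

theorem exists_nbhd_NminusLow_subset {f : UI → ℝ} (hf : IsC1 f) {a b : ℝ} (hab : a < b) :
    ∃ δ > 0, nbhd (NminusLow f a) δ ⊆ NminusLow f b := by
  obtain ⟨δ, hδ, h⟩ := exists_nbhd_NplusUp_subset hf.comp_symm hab
  refine ⟨δ, hδ, ?_⟩
  rw [NminusLow_eq_preimage_symm, NminusLow_eq_preimage_symm, nbhd_eq_thickening,
    isometry_symm.thickening_preimage_of_involutive symm_involutive, ← nbhd_eq_thickening]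
  exact preimage_mono h

theorem exists_nbhd_Nhat_subset {f : UI → ℝ} (hf : IsC1 f) {a b : ℝ} (hab : a < b) :
    ∃ δ > 0, nbhd (Nhat f a) δ ⊆ Nhat f b := by
  have hplus := exists_nbhd_NplusUp_subset hf hab
  have hminus := exists_nbhd_NminusLow_subset hf hab
  simp only [Nhat, nbhd_eq_thickening] at hplus hminus ⊢
  exact exists_thickening_union_subset hplus hminus

theorem nbhd_N_subset_of_C1_general (f : UI → ℝ) (hf : IsC1 f) (a b : ℝ) (hab : a < b) :
    ∃ δ > 0, nbhd (Nhat f a) δ ⊆ Nhat f b ∧ nbhd (Ncheck f a) δ ⊆ Ncheck f b := by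
  obtain ⟨δ₁, hδ₁, h₁⟩ := exists_nbhd_Nhat_subset hf hab
  obtain ⟨δ₂, hδ₂, h₂⟩ := exists_nbhd_Nhat_subset hf.neg hab
  simp only [Ncheck_eq_Nhat_neg, nbhd_eq_thickening] at h₁ h₂ ⊢
  exact ⟨min δ₁ δ₂, lt_min hδ₁ hδ₂, (thickening_mono (min_le_left _ _) _).trans h₁,
    (thickening_mono (min_le_right _ _) _).trans h₂⟩

/-- If `f ∈ C¹(I)` and `0 < a < b`, then `B(N̂(f,a),δ) ⊆ N̂(f,b)` and
`B(Ň(f,a),δ) ⊆ Ň(f,b)` for some `δ > 0`. -/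
theorem nbhd_N_subset_of_C1 (f : UI → ℝ) (hf : IsC1 f) (a b : ℝ) (ha : 0 < a) (hab : a < b) :
    ∃ δ > 0, nbhd (Nhat f a) δ ⊆ Nhat f b ∧ nbhd (Ncheck f a) δ ⊆ Ncheck f b :=
  nbhd_N_subset_of_C1_general f hf a b hab

end
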